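/- arXiv:2604.09281 — 3 statements merged into one kernel-verified Lean document; each statement's English description precedes it below -/
import Mathlib

section
/- Assume m_c < m < 1 where m_c := max(0,(d-2)/d), and set c* := ( ((1-m)·b/(2m)) · Γ(α/(1-m))/Γ(1-α+α/(1-m)) )^{-1/(1-m)}. Then the function U*(z) := c*·z^{-2/(1-m)} is a profile solution: for every z > 0, the function ρ ↦ K(z,ρ)·U*(ρ) is Lebesgue integrable on (z,∞) and U*(z)^m = ∫_z^∞ K(z,ρ)·U*(ρ) dρ. -/
/-!
Substituting `ρ = z / η` turns `∫_z^∞ K(z,ρ) ρ^{-γ} dρ` into `z^{2-γ} ∫_0^1 η^{γ-3} Q(η) dη`.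
Exchanging the order of integration in this moment of `Q` and substituting `σ = t^b` reduces it
to a Beta integral, whose value is `J = b/(γ-2) · Γ(b(γ-d)) / Γ(b(γ-d)+1-α)`; both integrals
converge when `γ > 2` and `γ > d`. For `γ = 2/(1-m)` these hold because `m > m_c`, the
power `z^{-γm}` equals `z^{2-γ}`, and the profile equation for `c z^{-γ}` reduces to `c^m = c J`,
solved by `c = J^{-1/(1-m)} = c*`.
-/

open MeasureTheory Set Filter

/-- The kernel profile `Q(η) = (1/Γ(1-α)) ∫_η^1 (1-σ^{1/b})^{-α} σ^{1-d} dσ` for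
`η ∈ (0,1)`; for `η ≥ 1` the interval `(η,1)` is empty, so `Q(η) = 0`. -/
noncomputable def Qker (d : ℕ) (α b : ℝ) (η : ℝ) : ℝ :=
  (1 / Real.Gamma (1 - α)) *
    ∫ σ in Set.Ioo η 1, (1 - σ ^ (1 / b)) ^ (-α) * σ ^ (1 - (d:ℝ))

/-- The kernel `K(z,ρ) = ρ·Q(z/ρ)`. -/
noncomputable def Kker (d : ℕ) (α b : ℝ) (z ρ : ℝ) : ℝ := ρ * Qker d α b (z / ρ)

/-- A profile solution: `U : (0,∞) → [0,∞)` with, for every `z > 0`,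
`ρ ↦ K(z,ρ)·U(ρ)` integrable on `(z,∞)` and `U(z)^m = ∫_z^∞ K(z,ρ)·U(ρ) dρ`. -/
def IsProfileSolution (d : ℕ) (α b m : ℝ) (U : ℝ → ℝ) : Prop :=
  (∀ z, 0 < z → 0 ≤ U z) ∧
  ∀ z, 0 < z →
    MeasureTheory.IntegrableOn (fun ρ => Kker d α b z ρ * U ρ) (Set.Ioi z) ∧
    U z ^ m = ∫ ρ in Set.Ioi z, Kker d α b z ρ * U ρ

section Beta

lemma ofReal_beta_integrand {x : ℝ} (hx : x ∈ Ioo (0:ℝ) 1) (u v : ℝ) :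
    (x : ℂ) ^ ((u : ℂ) - 1) * (1 - (x : ℂ)) ^ ((v : ℂ) - 1)
      = ((x ^ (u - 1) * (1 - x) ^ (v - 1) : ℝ) : ℂ) := by
  have h1x : (1 - (x : ℂ)) = ((1 - x : ℝ) : ℂ) := by push_cast; ring
  rw [h1x, Complex.ofReal_mul, Complex.ofReal_cpow hx.1.le,
    Complex.ofReal_cpow (by linarith [hx.2])]
  push_cast
  ring_nf

variable {u v : ℝ}

lemma integrableOn_rpow_mul_one_sub_rpow (hu : 0 < u) (hv : 0 < v) :
    IntegrableOn (fun t : ℝ => t ^ (u - 1) * (1 - t) ^ (v - 1)) (Ioo 0 1) := by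
  have hC := (Complex.betaIntegral_convergent (u := u) (v := v) (by simpa using hu)
    (by simpa using hv)).norm.1.mono_set Ioo_subset_Ioc_self
  refine hC.congr_fun (fun x hx => ?_) measurableSet_Ioo
  have h0 : 0 ≤ x ^ (u - 1) * (1 - x) ^ (v - 1) :=
    mul_nonneg (Real.rpow_nonneg hx.1.le _) (Real.rpow_nonneg (by linarith [hx.2]) _)
  simp only [ofReal_beta_integrand hx, Complex.norm_real, Real.norm_of_nonneg h0]

lemma integral_rpow_mul_one_sub_rpow (hu : 0 < u) (hv : 0 < v) :
    ∫ t in Ioo (0:ℝ) 1, t ^ (u - 1) * (1 - t) ^ (v - 1)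
      = Real.Gamma u * Real.Gamma v / Real.Gamma (u + v) := by
  have hB := Complex.betaIntegral_eq_Gamma_mul_div u v (by simpa using hu) (by simpa using hv)
  rw [Complex.betaIntegral, intervalIntegral.integral_of_le zero_le_one,
    integral_Ioc_eq_integral_Ioo, setIntegral_congr_fun measurableSet_Ioo
      (fun x hx => ofReal_beta_integrand hx u v), integral_complex_ofReal,
    Complex.Gamma_ofReal, Complex.Gamma_ofReal, ← Complex.ofReal_add, Complex.Gamma_ofReal] at hB
  exact_mod_cast hB

end Beta

section Subst
variable {b : ℝ}

lemma rpow_image_Ioo_zero_one (hb : 0 < b) : (fun t : ℝ => t ^ b) '' Ioo 0 1 = Ioo 0 1 := by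
  refine Subset.antisymm ?_ fun y hy => ⟨y ^ b⁻¹, ?_, ?_⟩
  · rintro _ ⟨t, ht, rfl⟩
    exact ⟨Real.rpow_pos_of_pos ht.1 b, Real.rpow_lt_one ht.1.le ht.2 hb⟩
  · exact ⟨Real.rpow_pos_of_pos hy.1 _, Real.rpow_lt_one hy.1.le hy.2 (inv_pos.2 hb)⟩
  · exact Real.rpow_inv_rpow hy.1.le hb.ne'

lemma rpow_injOn_Ioo_zero_one (hb : 0 < b) : InjOn (fun t : ℝ => t ^ b) (Ioo 0 1) :=
  (Real.rpow_left_injOn hb.ne').mono fun _ ht => ht.1.le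

lemma integral_one_sub_rpow_one_div_mul_rpow {v q : ℝ} (hb : 0 < b) (hv : 0 < v)
    (hq : 0 < b * (q + 1)) :
    IntegrableOn (fun σ : ℝ => (1 - σ ^ (1 / b)) ^ (v - 1) * σ ^ q) (Ioo 0 1) ∧
    ∫ σ in Ioo (0:ℝ) 1, (1 - σ ^ (1 / b)) ^ (v - 1) * σ ^ q
      = b * (Real.Gamma (b * (q + 1)) * Real.Gamma v / Real.Gamma (b * (q + 1) + v)) := by
  have hderiv : ∀ t ∈ Ioo (0:ℝ) 1,
      HasDerivWithinAt (fun t : ℝ => t ^ b) (b * t ^ (b - 1)) (Ioo 0 1) t := fun t ht =>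
    (Real.hasDerivAt_rpow_const (Or.inl ht.1.ne')).hasDerivWithinAt
  have hintegrand : EqOn (fun t : ℝ => b * (t ^ (b * (q + 1) - 1) * (1 - t) ^ (v - 1)))
      (fun t => |b * t ^ (b - 1)| • ((1 - (t ^ b) ^ (1 / b)) ^ (v - 1) * (t ^ b) ^ q))
      (Ioo 0 1) := by
    intro t ht
    dsimp only
    rw [smul_eq_mul, abs_of_pos (by have := ht.1; positivity), ← Real.rpow_mul ht.1.le,
      ← Real.rpow_mul ht.1.le, mul_one_div_cancel hb.ne', Real.rpow_one,
      show b * (q + 1) - 1 = (b - 1) + b * q by ring, Real.rpow_add ht.1]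
    ring
  rw [← rpow_image_Ioo_zero_one hb,
    integrableOn_image_iff_integrableOn_abs_deriv_smul measurableSet_Ioo hderiv
      (rpow_injOn_Ioo_zero_one hb),
    integral_image_eq_integral_abs_deriv_smul measurableSet_Ioo hderiv
      (rpow_injOn_Ioo_zero_one hb), ← setIntegral_congr_fun measurableSet_Ioo hintegrand,
    integral_const_mul, integral_rpow_mul_one_sub_rpow hq hv]
  exact ⟨IntegrableOn.congr_fun ((integrableOn_rpow_mul_one_sub_rpow hq hv).const_mul b)
    hintegrand measurableSet_Ioo, rfl⟩

end Subst

section Triangle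
variable {a c : ℝ} {f g : ℝ → ℝ}

lemma indicator_triangle_eq_left (σ η : ℝ) :
    {p : ℝ × ℝ | a < p.2 ∧ p.2 < p.1 ∧ p.1 < c}.indicator (fun p => g p.1 * f p.2) (σ, η)
      = (Ioo a c).indicator g σ * (Ioo a σ).indicator f η := by
  simp only [indicator, mem_ofPred_eq, mem_Ioo]
  split_ifs <;> grind

lemma indicator_triangle_eq_right (σ η : ℝ) :
    {p : ℝ × ℝ | a < p.2 ∧ p.2 < p.1 ∧ p.1 < c}.indicator (fun p => g p.1 * f p.2) (σ, η)
      = (Ioo a c).indicator f η * (Ioo η c).indicator g σ := by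
  simp only [indicator, mem_ofPred_eq, mem_Ioo]
  split_ifs <;> grind

lemma integral_mul_integral_Ioo_swap (hfm : Measurable f) (hgm : Measurable g)
    (hf0 : ∀ x ∈ Ioo a c, 0 ≤ f x) (hg0 : ∀ x ∈ Ioo a c, 0 ≤ g x)
    (hf : IntegrableOn f (Ioo a c))
    (hfg : IntegrableOn (fun σ => g σ * ∫ η in Ioo a σ, f η) (Ioo a c)) :
    IntegrableOn (fun η => f η * ∫ σ in Ioo η c, g σ) (Ioo a c) ∧
    ∫ η in Ioo a c, f η * ∫ σ in Ioo η c, g σ = ∫ σ in Ioo a c, g σ * ∫ η in Ioo a σ, f η := by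
  set F : ℝ → ℝ → ℝ := fun σ η => (Ioo a c).indicator g σ * (Ioo a σ).indicator f η with hF
  have hFm : Measurable (Function.uncurry F) := by
    have hT : MeasurableSet {p : ℝ × ℝ | a < p.2 ∧ p.2 < p.1 ∧ p.1 < c} :=
      (measurableSet_lt measurable_const measurable_snd).inter
        ((measurableSet_lt measurable_snd measurable_fst).inter
          (measurableSet_lt measurable_fst measurable_const))
    convert ((hgm.comp measurable_fst).mul (hfm.comp measurable_snd)).indicator hT using 1
    funext p
    exact (indicator_triangle_eq_left p.1 p.2).symm
  have hF0 : ∀ σ η, 0 ≤ F σ η := fun σ η => by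
    show 0 ≤ (Ioo a c).indicator g σ * (Ioo a σ).indicator f η
    rw [← indicator_triangle_eq_left]
    exact indicator_nonneg (fun p hp => mul_nonneg (hg0 _ ⟨hp.1.trans hp.2.1, hp.2.2⟩)
      (hf0 _ ⟨hp.1, hp.2.1.trans hp.2.2⟩)) _
  have hσslice : ∀ σ, ∫ η, F σ η = (Ioo a c).indicator (fun σ => g σ * ∫ η in Ioo a σ, f η) σ := by
    intro σ
    rw [integral_const_mul, integral_indicator measurableSet_Ioo, indicator_mul_left]
  have hηslice : ∀ η, ∫ σ, F σ η = (Ioo a c).indicator (fun η => f η * ∫ σ in Ioo η c, g σ) η := by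
    intro η
    simp only [hF, ← indicator_triangle_eq_left, indicator_triangle_eq_right]
    rw [integral_const_mul, integral_indicator measurableSet_Ioo, indicator_mul_left]
  have hFint : Integrable (Function.uncurry F) (volume.prod volume) := by
    refine (integrable_prod_iff hFm.aestronglyMeasurable).2 ⟨Eventually.of_forall fun σ => ?_, ?_⟩
    · show Integrable (F σ)
      by_cases hσ : σ ∈ Ioo a c
      · exact ((integrable_indicator_iff measurableSet_Ioo).2
          (hf.mono_set (Ioo_subset_Ioo_right hσ.2.le))).const_mul _
      · simp [hF, indicator_of_notMem hσ]
    · simp only [Function.uncurry, Real.norm_of_nonneg (hF0 _ _), hσslice]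
      exact (integrable_indicator_iff measurableSet_Ioo).2 hfg
  have hswap := integral_integral_swap hFint
  have hηint := hFint.integral_prod_right
  simp only [Function.uncurry_apply_pair, hσslice, hηslice,
    integral_indicator measurableSet_Ioo] at hswap hηint
  exact ⟨(integrable_indicator_iff measurableSet_Ioo).1 hηint, hswap.symm⟩

end Triangle

lemma integral_Ioo_zero_rpow {p σ : ℝ} (hp : -1 < p) (hσ : 0 < σ) :
    ∫ t in Ioo 0 σ, t ^ p = σ ^ (p + 1) / (p + 1) := by
  rw [← integral_Ioc_eq_integral_Ioo, ← intervalIntegral.integral_of_le hσ.le,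
    integral_rpow (Or.inl hp), Real.zero_rpow (by linarith), sub_zero]

lemma integral_rpow_mul_Qker {d : ℕ} {α b γ : ℝ} (hα : α ∈ Ioo (0:ℝ) 1) (hb : 0 < b)
    (hγ2 : 2 < γ) (hγd : (d:ℝ) < γ) :
    IntegrableOn (fun η : ℝ => η ^ (γ - 3) * Qker d α b η) (Ioo 0 1) ∧
    ∫ η in Ioo (0:ℝ) 1, η ^ (γ - 3) * Qker d α b η
      = b / (γ - 2) * (Real.Gamma (b * (γ - d)) / Real.Gamma (b * (γ - d) + (1 - α))) := by
  set g : ℝ → ℝ := fun σ => (1 - σ ^ (1 / b)) ^ (-α) * σ ^ (1 - (d:ℝ))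
  have hg0 : ∀ σ ∈ Ioo (0:ℝ) 1, 0 ≤ g σ := fun σ hσ =>
    mul_nonneg (Real.rpow_nonneg (sub_nonneg.2 (Real.rpow_le_one hσ.1.le hσ.2.le (by positivity))) _)
      (Real.rpow_nonneg hσ.1.le _)
  have hmoment : EqOn (fun σ => 1 / (γ - 2) * ((1 - σ ^ (1 / b)) ^ ((1 - α) - 1) * σ ^ (γ - 1 - d)))
      (fun σ => g σ * ∫ η in Ioo 0 σ, η ^ (γ - 3)) (Ioo 0 1) := by
    intro σ hσ
    simp only [g, integral_Ioo_zero_rpow (by linarith : -1 < γ - 3) hσ.1,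
      show γ - 1 - d = (1 - d) + (γ - 3 + 1) by ring, Real.rpow_add hσ.1, sub_sub_cancel_left]
    ring
  obtain ⟨hint, hval⟩ := integral_one_sub_rpow_one_div_mul_rpow (v := 1 - α) (q := γ - 1 - d) hb
    (by linarith [hα.2]) (by nlinarith)
  obtain ⟨hswap_int, hswap⟩ := integral_mul_integral_Ioo_swap (f := fun η => η ^ (γ - 3)) (g := g)
    (by fun_prop) (by fun_prop) (fun η hη => Real.rpow_nonneg hη.1.le _) hg0
    ((intervalIntegral.intervalIntegrable_rpow' (by linarith)).1.mono_set Ioo_subset_Ioc_self)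
    (IntegrableOn.congr_fun (hint.const_mul _) hmoment measurableSet_Ioo)
  have hQ : (fun η => η ^ (γ - 3) * Qker d α b η)
      = fun η => 1 / Real.Gamma (1 - α) * (η ^ (γ - 3) * ∫ σ in Ioo η 1, g σ) := by
    funext η; simp only [Qker, g]; ring
  have hΓ : Real.Gamma (1 - α) ≠ 0 := (Real.Gamma_pos_of_pos (by linarith [hα.2])).ne'
  refine ⟨hQ ▸ hswap_int.const_mul _, ?_⟩
  rw [hQ, integral_const_mul, hswap, ← setIntegral_congr_fun measurableSet_Ioo hmoment,
    integral_const_mul, hval, show γ - 1 - d + 1 = γ - d by ring]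
  field_simp

section Inversion
variable {z : ℝ}

lemma div_image_Ioo_zero_one (hz : 0 < z) : (fun η : ℝ => z / η) '' Ioo 0 1 = Ioi z := by
  refine Subset.antisymm ?_ fun ρ hρ => ⟨z / ρ, ?_, div_div_cancel₀ hz.ne'⟩
  · rintro _ ⟨η, hη, rfl⟩
    exact (lt_div_iff₀ hη.1).2 (mul_lt_of_lt_one_right hz hη.2)
  · have hρ0 : 0 < ρ := hz.trans hρ
    exact ⟨div_pos hz hρ0, (div_lt_one hρ0).2 hρ⟩

lemma div_injOn_Ioo_zero_one (hz : 0 < z) : InjOn (fun η : ℝ => z / η) (Ioo 0 1) :=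
  fun x _ y _ h => by
    rw [← div_div_cancel₀ (b := x) hz.ne', ← div_div_cancel₀ (b := y) hz.ne']
    exact congrArg (z / ·) h

lemma hasDerivWithinAt_const_div {η : ℝ} (hη : η ≠ 0) (s : Set ℝ) :
    HasDerivWithinAt (fun η : ℝ => z / η) (-(z / η ^ 2)) s η := by
  simpa [div_eq_mul_inv] using ((hasDerivAt_inv hη).const_mul z).hasDerivWithinAt

lemma integrableOn_Ioi_iff_comp_div (hz : 0 < z) (h : ℝ → ℝ) :
    IntegrableOn h (Ioi z) ↔ IntegrableOn (fun η => z / η ^ 2 * h (z / η)) (Ioo 0 1) := by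
  rw [← div_image_Ioo_zero_one hz, integrableOn_image_iff_integrableOn_abs_deriv_smul
    measurableSet_Ioo (fun η hη => hasDerivWithinAt_const_div hη.1.ne' _)
    (div_injOn_Ioo_zero_one hz)]
  refine integrableOn_congr_fun (fun η hη => ?_) measurableSet_Ioo
  rw [abs_neg, abs_of_pos (by have := hη.1; positivity), smul_eq_mul]

lemma integral_Ioi_eq_integral_comp_div (hz : 0 < z) (h : ℝ → ℝ) :
    ∫ ρ in Ioi z, h ρ = ∫ η in Ioo 0 1, z / η ^ 2 * h (z / η) := by
  rw [← div_image_Ioo_zero_one hz, integral_image_eq_integral_abs_deriv_smul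
    measurableSet_Ioo (fun η hη => hasDerivWithinAt_const_div hη.1.ne' _)
    (div_injOn_Ioo_zero_one hz)]
  refine setIntegral_congr_fun measurableSet_Ioo (fun η hη => ?_)
  rw [abs_neg, abs_of_pos (by have := hη.1; positivity), smul_eq_mul]

end Inversion

section Profile
variable {d : ℕ} {α b γ : ℝ}

lemma div_sq_mul_Kker_div_mul_rpow {z η : ℝ} (hz : 0 < z) (hη : 0 < η) :
    z / η ^ 2 * (Kker d α b z (z / η) * (z / η) ^ (-γ))
      = z ^ (2 - γ) * (η ^ (γ - 3) * Qker d α b η) := by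
  rw [Kker, div_div_cancel₀ hz.ne', Real.div_rpow hz.le hη.le, Real.rpow_sub hz,
    Real.rpow_sub hη, Real.rpow_neg hz.le, Real.rpow_neg hη.le, Real.rpow_two, Real.rpow_ofNat]
  field_simp

lemma integral_Kker_mul_rpow (hα : α ∈ Ioo (0:ℝ) 1) (hb : 0 < b) (hγ2 : 2 < γ)
    (hγd : (d:ℝ) < γ) {z : ℝ} (hz : 0 < z) :
    IntegrableOn (fun ρ => Kker d α b z ρ * ρ ^ (-γ)) (Ioi z) ∧
    ∫ ρ in Ioi z, Kker d α b z ρ * ρ ^ (-γ)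
      = z ^ (2 - γ) *
        (b / (γ - 2) * (Real.Gamma (b * (γ - d)) / Real.Gamma (b * (γ - d) + (1 - α)))) := by
  obtain ⟨hint, hval⟩ := integral_rpow_mul_Qker hα hb hγ2 hγd
  have hsubst : EqOn (fun η => z ^ (2 - γ) * (η ^ (γ - 3) * Qker d α b η))
      (fun η => z / η ^ 2 * (Kker d α b z (z / η) * (z / η) ^ (-γ))) (Ioo 0 1) :=
    fun η hη => (div_sq_mul_Kker_div_mul_rpow hz hη.1).symm
  rw [integrableOn_Ioi_iff_comp_div hz, integral_Ioi_eq_integral_comp_div hz,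
    ← setIntegral_congr_fun measurableSet_Ioo hsubst, integral_const_mul, hval]
  exact ⟨IntegrableOn.congr_fun (hint.const_mul _) hsubst measurableSet_Ioo, rfl⟩

lemma isProfileSolution_const_mul_rpow_neg (hα : α ∈ Ioo (0:ℝ) 1) (hb : 0 < b) (hγ2 : 2 < γ)
    (hγd : (d:ℝ) < γ) {m c : ℝ} (hc : 0 ≤ c) (hγm : γ * (1 - m) = 2)
    (hcm : c ^ m = c *
      (b / (γ - 2) * (Real.Gamma (b * (γ - d)) / Real.Gamma (b * (γ - d) + (1 - α))))) :
    IsProfileSolution d α b m (fun z => c * z ^ (-γ)) := by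
  refine ⟨fun z hz => mul_nonneg hc (Real.rpow_nonneg hz.le _), fun z hz => ?_⟩
  obtain ⟨hint, hval⟩ := integral_Kker_mul_rpow hα hb hγ2 hγd hz
  simp only [mul_left_comm _ c, integral_const_mul, hval]
  refine ⟨hint.const_mul c, ?_⟩
  rw [Real.mul_rpow hc (Real.rpow_nonneg hz.le _), ← Real.rpow_mul hz.le, hcm,
    show -γ * m = 2 - γ by linarith]
  ring

end Profile

lemma rpow_neg_one_div_one_sub_rpow {J m : ℝ} (hJ : 0 < J) (hm : m ≠ 1) :
    (J ^ (-(1 / (1 - m)))) ^ m = J ^ (-(1 / (1 - m))) * J := by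
  have h1m : 1 - m ≠ 0 := sub_ne_zero.2 (Ne.symm hm)
  rw [← Real.rpow_mul hJ.le, ← Real.rpow_add_one hJ.ne']
  congr 1
  field_simp
  ring

/-- in the mildly-fast-diffusion range `m_c < m < 1`, the very singular
solution `U*(z) = c*·z^{-2/(1-m)}` is a profile solution. -/
theorem very_singular_solution (d : ℕ) (hd : 1 ≤ d) (α m b : ℝ)
    (hα : α ∈ Set.Ioo (0:ℝ) 1)
    (hmc : max 0 (((d:ℝ) - 2) / d) < m) (hm1 : m < 1)
    (hb : b = α / (2 + (d:ℝ) * (m - 1)))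
    (cstar : ℝ)
    (hc : cstar = (((1 - m) * b / (2 * m)) *
      Real.Gamma (α / (1 - m)) / Real.Gamma (1 - α + α / (1 - m))) ^ (-(1 / (1 - m)))) :
    IsProfileSolution d α b m (fun z => cstar * z ^ (-(2 / (1 - m)))) := by
  obtain ⟨hm0, hdm⟩ := max_lt_iff.1 hmc
  have h1m : 0 < 1 - m := by linarith
  replace hdm : (d:ℝ) - 2 < d * m := by
    rwa [div_lt_iff₀ (by exact_mod_cast hd), mul_comm] at hdm
  have hden : 0 < 2 + d * (m - 1) := by linarith
  have hb0 : 0 < b := hb ▸ div_pos hα.1 hden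
  set γ := 2 / (1 - m) with hγ
  have hγm : γ * (1 - m) = 2 := div_mul_cancel₀ _ h1m.ne'
  have hbγ : b * (γ - d) = α / (1 - m) := by
    rw [hb, hγ]
    field_simp
    ring
  have hcoef : b / (γ - 2) = (1 - m) * b / (2 * m) := by
    rw [hγ]
    field_simp [hm0.ne']
    ring
  set J := (1 - m) * b / (2 * m) * Real.Gamma (α / (1 - m)) / Real.Gamma (1 - α + α / (1 - m))
  have hJ : 0 < J :=
    div_pos (mul_pos (by positivity) (Real.Gamma_pos_of_pos (div_pos hα.1 h1m)))
      (Real.Gamma_pos_of_pos (by linarith [hα.2, div_pos hα.1 h1m]))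
  refine isProfileSolution_const_mul_rpow_neg hα hb0 (by nlinarith) (by nlinarith)
    (hc ▸ Real.rpow_nonneg hJ.le _) hγm ?_
  rw [hbγ, hcoef, add_comm (α / (1 - m)), hc, rpow_neg_one_div_one_sub_rpow hJ hm1.ne]
  ring
end

section
/- For every γ > max(2,d) one has ∫_0^1 Q(σ)·σ^{γ-3} dσ = (b/(γ-2)) · Γ(b(γ-d))/Γ(1-α+b(γ-d)). -/
open MeasureTheory Set Filter


lemma realBeta_intervalIntegral (s t : ℝ) (hs : 0 < s) (ht : 0 < t) :
    (∫ x in (0:ℝ)..1, x ^ (s-1) * (1-x) ^ (t-1))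
      = Real.Gamma s * Real.Gamma t / Real.Gamma (s+t) := by
  have key : Complex.betaIntegral s t
      = ((∫ x in (0:ℝ)..1, x ^ (s-1) * (1-x) ^ (t-1) : ℝ) : ℂ) := by
    rw [Complex.betaIntegral, ← intervalIntegral.integral_ofReal]
    apply intervalIntegral.integral_congr
    intro x hx
    rw [uIcc_of_le zero_le_one, mem_Icc] at hx
    push_cast
    rw [Complex.ofReal_cpow hx.1, Complex.ofReal_cpow (by linarith : (0:ℝ) ≤ 1 - x)]
    push_cast
    ring
  have h := Complex.Gamma_mul_Gamma_eq_betaIntegral (s := (s:ℂ)) (t := (t:ℂ))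
    (by simpa using hs) (by simpa using ht)
  rw [key] at h
  have hst : (0:ℝ) < Real.Gamma (s + t) := Real.Gamma_pos_of_pos (by linarith)
  have : ((s:ℂ) + t) = ((s + t : ℝ) : ℂ) := by push_cast; ring
  rw [this, Complex.Gamma_ofReal, Complex.Gamma_ofReal, Complex.Gamma_ofReal,
    ← Complex.ofReal_mul, ← Complex.ofReal_mul] at h
  have h' := Complex.ofReal_injective h
  field_simp
  linarith [h']

lemma realBeta_Ioo (s t : ℝ) (hs : 0 < s) (ht : 0 < t) :
    (∫ x in Ioo (0:ℝ) 1, x ^ (s-1) * (1-x) ^ (t-1))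
      = Real.Gamma s * Real.Gamma t / Real.Gamma (s+t) := by
  rw [← realBeta_intervalIntegral s t hs ht, intervalIntegral.integral_of_le zero_le_one,
    MeasureTheory.integral_Ioc_eq_integral_Ioo]

lemma realBeta_integrableOn (s t : ℝ) (hs : 0 < s) (ht : 0 < t) :
    IntegrableOn (fun x => x ^ (s-1) * (1-x) ^ (t-1)) (Ioo (0:ℝ) 1) := by
  have hc := Complex.betaIntegral_convergent (u := (s:ℂ)) (v := (t:ℂ))
    (by simpa using hs) (by simpa using ht)
  rw [intervalIntegrable_iff_integrableOn_Ioo_of_le zero_le_one] at hc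
  have heq : EqOn (fun x : ℝ => ((x ^ (s-1) * (1-x) ^ (t-1) : ℝ) : ℂ))
      (fun x : ℝ => (x : ℂ) ^ ((s:ℂ) - 1) * (1 - (x:ℂ)) ^ ((t:ℂ) - 1)) (Ioo 0 1) := by
    intro x hx
    simp only
    push_cast
    rw [Complex.ofReal_cpow hx.1.le, Complex.ofReal_cpow (by linarith [hx.2] : (0:ℝ) ≤ 1 - x)]
    push_cast
    ring
  have : IntegrableOn (fun x : ℝ => ((x ^ (s-1) * (1-x) ^ (t-1) : ℝ) : ℂ)) (Ioo (0:ℝ) 1) :=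
    (hc.congr_fun heq.symm measurableSet_Ioo)
  simpa [IntegrableOn, RCLike.re] using this.re

section J
variable {b α γ : ℝ}

lemma phi_image (hb : 0 < b) : (fun u : ℝ => u ^ b) '' Ioo 0 1 = Ioo (0:ℝ) 1 := by
  ext v
  constructor
  · rintro ⟨u, hu, rfl⟩
    exact ⟨Real.rpow_pos_of_pos hu.1 b, Real.rpow_lt_one hu.1.le hu.2 hb⟩
  · intro hv
    refine ⟨v ^ (1/b), ⟨Real.rpow_pos_of_pos hv.1 _, Real.rpow_lt_one hv.1.le hv.2 (by positivity)⟩, ?_⟩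
    show (v ^ (1/b)) ^ b = v
    rw [← Real.rpow_mul hv.1.le, one_div_mul_cancel hb.ne', Real.rpow_one]

lemma phi_inj (hb : 0 < b) : InjOn (fun u : ℝ => u ^ b) (Ioo 0 1) := by
  intro x hx y hy h
  have := congrArg (fun z : ℝ => z ^ (1/b)) h
  simpa [← Real.rpow_mul hx.1.le, ← Real.rpow_mul hy.1.le,
    mul_inv_cancel₀ hb.ne'] using this

lemma phi_deriv (hb : 0 < b) : ∀ u ∈ Ioo (0:ℝ) 1,
    HasDerivWithinAt (fun u : ℝ => u ^ b) (b * u ^ (b-1)) (Ioo 0 1) u := fun u hu =>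
  (Real.hasDerivAt_rpow_const (Or.inl hu.1.ne')).hasDerivWithinAt

lemma J_eq (hb : 0 < b) (hα : α ∈ Ioo (0:ℝ) 1) {c : ℝ} (hc : -1 < c) :
    EqOn (fun u : ℝ => |b * u ^ (b-1)| • ((1 - (u ^ b) ^ (1/b)) ^ (-α) * (u ^ b) ^ c))
      (fun u : ℝ => b * (u ^ (b * (c+1) - 1) * (1-u) ^ ((1-α) - 1))) (Ioo 0 1) := by
  intro u hu
  have hu0 := hu.1
  have h1 : (u ^ b) ^ (1/b) = u := by
    rw [← Real.rpow_mul hu0.le, mul_one_div_cancel hb.ne', Real.rpow_one]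
  have h2 : (u ^ b) ^ c = u ^ (b * c) := by rw [← Real.rpow_mul hu0.le]
  have h3 : |b * u ^ (b-1)| = b * u ^ (b-1) := abs_of_pos (by positivity)
  simp only [smul_eq_mul, h1, h2, h3]
  rw [show (1:ℝ) - α - 1 = -α by ring]
  rw [show b * (c+1) - 1 = (b - 1) + b * c by ring, Real.rpow_add hu0]
  ring

lemma J_integral (hb : 0 < b) (hα : α ∈ Ioo (0:ℝ) 1) {c : ℝ} (hc : -1 < c) :
    (∫ τ in Ioo (0:ℝ) 1, (1 - τ ^ (1/b)) ^ (-α) * τ ^ c)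
      = b * (Real.Gamma (b*(c+1)) * Real.Gamma (1-α) / Real.Gamma (b*(c+1) + (1-α))) := by
  have him := integral_image_eq_integral_abs_deriv_smul measurableSet_Ioo (phi_deriv hb)
    (phi_inj hb) (fun τ => (1 - τ ^ (1/b)) ^ (-α) * τ ^ c)
  rw [phi_image hb] at him
  rw [him, setIntegral_congr_fun measurableSet_Ioo (J_eq hb hα hc),
    integral_const_mul, realBeta_Ioo (b*(c+1)) (1-α) (mul_pos hb (by linarith)) (by linarith [hα.2])]

lemma J_integrableOn (hb : 0 < b) (hα : α ∈ Ioo (0:ℝ) 1) {c : ℝ} (hc : -1 < c) :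
    IntegrableOn (fun τ : ℝ => (1 - τ ^ (1/b)) ^ (-α) * τ ^ c) (Ioo (0:ℝ) 1) := by
  have him := integrableOn_image_iff_integrableOn_abs_deriv_smul measurableSet_Ioo
    (phi_deriv hb) (phi_inj hb) (fun τ => (1 - τ ^ (1/b)) ^ (-α) * τ ^ c)
  rw [phi_image hb] at him
  rw [him]
  have hI : IntegrableOn (fun u : ℝ => b * (u ^ (b * (c+1) - 1) * (1-u) ^ ((1-α) - 1)))
      (Ioo (0:ℝ) 1) :=
    (realBeta_integrableOn (b*(c+1)) (1-α) (mul_pos hb (by linarith)) (by linarith [hα.2])).const_mul b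
  exact hI.congr_fun (fun u hu => ((J_eq hb hα hc) hu).symm) measurableSet_Ioo

end J

/-- the explicit formula
`𝖰(γ) = ∫_0^1 Q(σ)·σ^{γ-3} dσ = (b/(γ-2))·Γ(b(γ-d))/Γ(1-α+b(γ-d))` for `γ > max(2,d)`. -/
theorem Q_moment_formula (d : ℕ) (hd : 1 ≤ d) (α m b : ℝ)
    (hα : α ∈ Set.Ioo (0:ℝ) 1)
    (hm : m > max 0 (((d:ℝ) - 2) / d))
    (hb : b = α / (2 + (d:ℝ) * (m - 1))) :
    ∀ γ : ℝ, max 2 (d:ℝ) < γ →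
      (∫ σ in Set.Ioo (0:ℝ) 1, Qker d α b σ * σ ^ (γ - 3))
        = (b / (γ - 2)) * Real.Gamma (b * (γ - (d:ℝ)))
            / Real.Gamma (1 - α + b * (γ - (d:ℝ))) := by
  intro γ hγ
  have hd0 : (0:ℝ) < d := by exact_mod_cast hd
  have hden : 0 < 2 + (d:ℝ) * (m - 1) := by
    have h1 : ((d:ℝ) - 2)/d < m := lt_of_le_of_lt (le_max_right _ _) hm
    rw [div_lt_iff₀ hd0] at h1; nlinarith
  have hbpos : 0 < b := hb ▸ div_pos hα.1 hden
  have hγ2 : 2 < γ := lt_of_le_of_lt (le_max_left _ _) hγ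
  have hγd : (d:ℝ) < γ := lt_of_le_of_lt (le_max_right _ _) hγ
  set g : ℝ → ℝ := fun τ => (1 - τ ^ (1/b)) ^ (-α) * τ ^ (1-(d:ℝ)) with hgdef
  set μ := volume.restrict (Ioo (0:ℝ) 1) with hμ
  set c : ℝ := γ - 1 - d with hcdef
  have hc : -1 < c := by rw [hcdef]; linarith
  set F : ℝ → ℝ → ℝ := fun σ τ => (Ioo σ 1).indicator g τ * σ ^ (γ - 3) with hFdef
  -- nonnegativity of g on (0,1)
  have hgnn : ∀ τ ∈ Ioo (0:ℝ) 1, 0 ≤ g τ := by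
    intro τ hτ
    have h1 : τ ^ (1/b) ≤ 1 := Real.rpow_le_one hτ.1.le hτ.2.le (by positivity)
    exact mul_nonneg (Real.rpow_nonneg (by linarith) _) (Real.rpow_nonneg hτ.1.le _)
  -- rewriting F for fixed τ ∈ (0,1)
  have hFτ : ∀ τ ∈ Ioo (0:ℝ) 1,
      (fun σ => F σ τ) = fun σ => (Iio τ).indicator (fun σ' => g τ * σ' ^ (γ-3)) σ := by
    intro τ hτ; funext σ
    by_cases h : σ < τ <;>
      simp [hFdef, Set.indicator_apply, mem_Ioo, mem_Iio, h, hτ.2]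
  have hpow : IntegrableOn (fun σ : ℝ => σ ^ (γ-3)) (Ioo (0:ℝ) 1) := by
    rw [← intervalIntegrable_iff_integrableOn_Ioo_of_le zero_le_one]
    exact intervalIntegral.intervalIntegrable_rpow' (by linarith)
  have hmom : ∀ τ ∈ Ioo (0:ℝ) 1, (∫ σ in Ioo (0:ℝ) τ, σ ^ (γ-3)) = τ ^ (γ-2) / (γ-2) := by
    intro τ hτ
    rw [← integral_Ioc_eq_integral_Ioo, ← intervalIntegral.integral_of_le hτ.1.le,
      integral_rpow (Or.inl (by linarith)),
      Real.zero_rpow (by intro h; linarith : γ - 3 + 1 ≠ 0),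
      show γ - 3 + 1 = γ - 2 by ring]
    ring
  have hinner : ∀ τ ∈ Ioo (0:ℝ) 1, (∫ σ, F σ τ ∂μ) = g τ * τ ^ (γ-2) / (γ-2) := by
    intro τ hτ
    rw [hFτ τ hτ, hμ, integral_indicator measurableSet_Iio,
      Measure.restrict_restrict measurableSet_Iio]
    have hset : Iio τ ∩ Ioo 0 1 = Ioo (0:ℝ) τ := by
      ext x
      simp only [mem_inter_iff, mem_Iio, mem_Ioo]
      constructor
      · rintro ⟨h1, h2, h3⟩; exact ⟨h2, h1⟩
      · rintro ⟨h1, h2⟩; exact ⟨h2, h1, h2.trans hτ.2⟩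
    rw [hset, integral_const_mul, hmom τ hτ]
    ring
  have hgm : Measurable g := by fun_prop
  have hFm : AEStronglyMeasurable (Function.uncurry F) (μ.prod μ) := by
    have hS : MeasurableSet {q : ℝ × ℝ | q.1 < q.2 ∧ q.2 < 1} :=
      (measurableSet_lt measurable_fst measurable_snd).inter
        (measurableSet_lt measurable_snd measurable_const)
    have huc : Function.uncurry F
        = fun p : ℝ × ℝ => {q : ℝ × ℝ | q.1 < q.2 ∧ q.2 < 1}.indicator (fun q => g q.2) p
            * p.1 ^ (γ-3) := by
      funext p
      simp [Function.uncurry, hFdef, Set.indicator_apply, mem_Ioo, mem_setOf_eq]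
    rw [huc]
    exact (((hgm.comp measurable_snd).indicator hS).mul
      (by fun_prop : Measurable fun p : ℝ × ℝ => p.1 ^ (γ-3))).aestronglyMeasurable
  have hJc : IntegrableOn (fun τ : ℝ => (1 - τ ^ (1/b)) ^ (-α) * τ ^ c) (Ioo (0:ℝ) 1) :=
    J_integrableOn hbpos hα hc
  have hgτ : ∀ τ ∈ Ioo (0:ℝ) 1, g τ * τ ^ (γ-2) = (1 - τ ^ (1/b)) ^ (-α) * τ ^ c := by
    intro τ hτ
    simp only [hgdef]
    rw [mul_assoc, ← Real.rpow_add hτ.1, show (1-(d:ℝ)) + (γ-2) = c by rw [hcdef]; ring]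
  -- integrability on the product
  have hFint : Integrable (Function.uncurry F) (μ.prod μ) := by
    rw [integrable_prod_iff' hFm]
    constructor
    · filter_upwards [ae_restrict_mem measurableSet_Ioo] with τ hτ
      show Integrable (fun σ => F σ τ) μ
      rw [hFτ τ hτ]
      exact ((hpow.const_mul (g τ)).indicator measurableSet_Iio)
    · have heq : (fun τ => ∫ σ, ‖F σ τ‖ ∂μ)
          =ᵐ[μ] fun τ => (1 - τ ^ (1/b)) ^ (-α) * τ ^ c / (γ-2) := by
        filter_upwards [ae_restrict_mem measurableSet_Ioo] with τ hτ
        have h1 : (∫ σ, ‖F σ τ‖ ∂μ) = ∫ σ, F σ τ ∂μ := by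
          apply integral_congr_ae
          filter_upwards [ae_restrict_mem measurableSet_Ioo] with σ hσ
          have h0 : 0 ≤ F σ τ :=
            mul_nonneg (indicator_nonneg
              (fun x hx => hgnn x ⟨hσ.1.trans hx.1, hx.2⟩) τ) (Real.rpow_nonneg hσ.1.le _)
          exact Real.norm_of_nonneg h0
        rw [h1, hinner τ hτ, hgτ τ hτ]
      exact ((hJc.div_const (γ-2)).congr heq.symm)
  have key : (∫ σ, (∫ τ, F σ τ ∂μ) ∂μ)
      = (∫ τ in Ioo (0:ℝ) 1, (1 - τ ^ (1/b)) ^ (-α) * τ ^ c) / (γ-2) := by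
    rw [integral_integral_swap hFint, ← integral_div]
    apply setIntegral_congr_fun measurableSet_Ioo
    intro τ hτ
    show (∫ σ, F σ τ ∂μ) = (1 - τ ^ (1/b)) ^ (-α) * τ ^ c / (γ-2)
    rw [hinner τ hτ, hgτ τ hτ]
  -- put everything together
  have lhs_eq : (∫ σ in Ioo (0:ℝ) 1, Qker d α b σ * σ ^ (γ - 3))
      = (1/Real.Gamma (1-α)) * ∫ σ, (∫ τ, F σ τ ∂μ) ∂μ := by
    rw [← integral_const_mul]
    apply setIntegral_congr_fun measurableSet_Ioo
    intro σ hσ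
    have hin : (∫ τ, F σ τ ∂μ) = (∫ τ in Ioo σ 1, g τ) * σ ^ (γ-3) := by
      rw [show (fun τ => F σ τ) = fun τ => (Ioo σ 1).indicator g τ * σ ^ (γ-3) from rfl,
        integral_mul_const, hμ, integral_indicator measurableSet_Ioo,
        Measure.restrict_restrict measurableSet_Ioo,
        inter_eq_self_of_subset_left (Ioo_subset_Ioo hσ.1.le le_rfl)]
    show Qker d α b σ * σ ^ (γ - 3) = 1 / Real.Gamma (1-α) * ∫ τ, F σ τ ∂μ
    rw [hin, Qker]
    ring
  rw [lhs_eq, key, J_integral hbpos hα hc, show c + 1 = γ - (d:ℝ) by rw [hcdef]; ring]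
  have hΓ1 : (0:ℝ) < Real.Gamma (1-α) := Real.Gamma_pos_of_pos (by linarith [hα.2])
  have hΓ2 : (0:ℝ) < Real.Gamma (b*(γ-(d:ℝ)) + (1-α)) :=
    Real.Gamma_pos_of_pos (by nlinarith [hα.2, mul_pos hbpos (by linarith : (0:ℝ) < γ - d)])
  rw [show (1:ℝ) - α + b * (γ - (d:ℝ)) = b*(γ-(d:ℝ)) + (1-α) by ring]
  have halg : ∀ A B C D : ℝ, B ≠ 0 → C ≠ 0 → D ≠ 0 →
      (1/B) * ((b * (A * B / C)) / D) = b / D * A / C := by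
    intros A B C D hB hC hD
    field_simp
  exact halg _ _ _ _ hΓ1.ne' hΓ2.ne' (by linarith : (0:ℝ) < γ - 2).ne'
end

section
/- Assume m > 1 and set γ := (2-α)/(m-1), so that γ·m = 2-α+γ. Then (1-z)^{-γm} · ∫_z^1 ρ·Q(z/ρ)·(1-ρ)^γ dρ tends to b^α·Γ(1+γ)/Γ(3-α+γ) as z → 1⁻. -/
open MeasureTheory Set Filter

/-!
Near `σ = 1` the integrand of `Q` behaves like `b^α (1-σ)^{-α}`, since `1 - σ^{1/b} ∼ (1-σ)/b`.
Hence `s^{α-1} Q(1-s)` is bounded on `(0, 1/2]` and tends to `b^α / Γ(2-α)` as `s → 0⁺`.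
Substituting `ρ = 1 - (1-z) t` and writing `z / ρ = 1 - s` with `s = (1-z)(1-t)/ρ`, the identity
`γ m = γ + 2 - α` turns the rescaled integral into `∫₀¹ t^γ (1-t)^{1-α} ρ^α s^{α-1} Q(1-s) dt`.
As `z → 1⁻` we have `ρ → 1` and `s → 0⁺`, so bounded convergence yields
`b^α / Γ(2-α) · B(1+γ, 2-α) = b^α Γ(1+γ) / Γ(3-α+γ)`.
-/

open Real Topology

lemma setIntegral_Ioo_one_sub {g : ℝ → ℝ} {ε : ℝ} (hε : 0 ≤ ε) :
    ∫ x in Ioo (1 - ε) 1, g x = ε * ∫ t in Ioo 0 1, g (1 - ε * t) := by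
  rw [← integral_Ioc_eq_integral_Ioo, ← integral_Ioc_eq_integral_Ioo,
    ← intervalIntegral.integral_of_le (by linarith),
    ← intervalIntegral.integral_of_le zero_le_one, intervalIntegral.mul_integral_comp_sub_mul]
  simp

lemma measurable_setIntegral_Ioo {f : ℝ → ℝ} (hf : Measurable f) (c : ℝ) :
    Measurable fun η => ∫ σ in Ioo η c, f σ := by
  have hF : StronglyMeasurable fun p : ℝ × ℝ => (Ioo p.1 c).indicator f p.2 := by
    have hS : MeasurableSet {p : ℝ × ℝ | p.1 < p.2 ∧ p.2 < c} :=
      (measurableSet_lt measurable_fst measurable_snd).inter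
        (measurableSet_lt measurable_snd measurable_const)
    exact (Measurable.ite hS (hf.comp measurable_snd) measurable_const).stronglyMeasurable
  simp_rw [← integral_indicator measurableSet_Ioo]
  exact hF.integral_prod_right'.measurable

lemma tendsto_integral_mul_of_bounded {X ι : Type*} [MeasurableSpace X] {μ : Measure X}
    {l : Filter ι} [l.IsCountablyGenerated] {w : X → ℝ} {g : ι → X → ℝ} {C L : ℝ}
    (hw : Integrable w μ) (hg_meas : ∀ᶠ i in l, AEStronglyMeasurable (g i) μ)
    (hg_bound : ∀ᶠ i in l, ∀ᵐ x ∂μ, ‖g i x‖ ≤ C)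
    (hg_lim : ∀ᵐ x ∂μ, Tendsto (g · x) l (𝓝 L)) :
    Tendsto (fun i => ∫ x, w x * g i x ∂μ) l (𝓝 (L * ∫ x, w x ∂μ)) := by
  rw [mul_comm, ← integral_mul_const]
  refine tendsto_integral_filter_of_dominated_convergence (fun x => ‖w x‖ * C) ?_ ?_
    (hw.norm.mul_const C) ?_
  · filter_upwards [hg_meas] with i hi using hw.aestronglyMeasurable.mul hi
  · filter_upwards [hg_bound] with i hi
    filter_upwards [hi] with x hx
    rw [norm_mul]
    exact mul_le_mul_of_nonneg_left hx (norm_nonneg _)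
  · filter_upwards [hg_lim] with x hx using hx.const_mul (w x)

lemma setIntegral_Ioo_rpow_mul_one_sub_rpow {p q : ℝ} (hp : 0 < p) (hq : 0 < q) :
    ∫ t in Ioo (0:ℝ) 1, t ^ (p - 1) * (1 - t) ^ (q - 1) = Gamma p * Gamma q / Gamma (p + q) := by
  have h := Complex.Gamma_mul_Gamma_eq_betaIntegral (s := p) (t := q)
    (by simpa using hp) (by simpa using hq)
  have hbeta : Complex.betaIntegral p q =
      ((∫ t in Ioo (0:ℝ) 1, t ^ (p - 1) * (1 - t) ^ (q - 1) : ℝ) : ℂ) := by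
    rw [Complex.betaIntegral, intervalIntegral.integral_of_le zero_le_one,
      integral_Ioc_eq_integral_Ioo, ← integral_complex_ofReal]
    refine setIntegral_congr_fun measurableSet_Ioo fun t ht => ?_
    push_cast
    rw [Complex.ofReal_cpow ht.1.le, Complex.ofReal_cpow (by linarith [ht.2])]
    push_cast
    ring_nf
  rw [hbeta, ← Complex.ofReal_add, Complex.Gamma_ofReal, Complex.Gamma_ofReal,
    Complex.Gamma_ofReal, ← Complex.ofReal_mul, ← Complex.ofReal_mul] at h
  rw [eq_div_iff (Gamma_pos_of_pos (add_pos hp hq)).ne', mul_comm]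
  exact (Complex.ofReal_injective h).symm

lemma setIntegral_Ioo_zero_one_rpow {r : ℝ} (hr : -1 < r) :
    ∫ u in Ioo (0:ℝ) 1, u ^ r = 1 / (r + 1) := by
  rw [← integral_Ioc_eq_integral_Ioo, ← intervalIntegral.integral_of_le zero_le_one,
    integral_rpow (Or.inl hr), one_rpow, zero_rpow (by linarith), sub_zero]

noncomputable def qkerIntegrand (d : ℕ) (α b σ : ℝ) : ℝ :=
  (1 - σ ^ (1 / b)) ^ (-α) * σ ^ (1 - (d : ℝ))

section kernel

variable {d : ℕ} {α b : ℝ}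

lemma Qker_eq (η : ℝ) :
    Qker d α b η = 1 / Gamma (1 - α) * ∫ σ in Ioo η 1, qkerIntegrand d α b σ := rfl

lemma measurable_qkerIntegrand : Measurable (qkerIntegrand d α b) := by
  unfold qkerIntegrand; fun_prop

lemma measurable_Qker : Measurable (Qker d α b) :=
  measurable_const.mul (measurable_setIntegral_Ioo measurable_qkerIntegrand 1)

lemma qkerIntegrand_nonneg (hb : 0 ≤ b) {σ : ℝ} (hσ₀ : 0 ≤ σ) (hσ₁ : σ ≤ 1) :
    0 ≤ qkerIntegrand d α b σ :=
  mul_nonneg (rpow_nonneg (sub_nonneg.2 (rpow_le_one hσ₀ hσ₁ (by positivity))) _)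
    (rpow_nonneg hσ₀ _)

lemma rpow_mul_qkerIntegrand_one_sub_mem_Icc (hd : 1 ≤ d) (hα : 0 ≤ α) (hb₀ : 0 < b)
    (hb₁ : b ≤ 1) {x : ℝ} (hx₀ : 0 < x) (hx : x ≤ 1 / 2) :
    x ^ α * qkerIntegrand d α b (1 - x) ∈ Icc 0 (2 ^ ((d : ℝ) - 1)) := by
  refine ⟨mul_nonneg (rpow_nonneg hx₀.le _)
    (qkerIntegrand_nonneg hb₀.le (by linarith) (by linarith)), ?_⟩
  have hx_le : x ≤ 1 - (1 - x) ^ (1 / b) := by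
    linarith [rpow_le_self_of_le_one (x := 1 - x) (by linarith) (by linarith)
      ((one_le_div hb₀).2 hb₁)]
  have h₁ : x ^ α * (1 - (1 - x) ^ (1 / b)) ^ (-α) ≤ 1 := by
    rw [rpow_neg (hx₀.le.trans hx_le), ← div_eq_mul_inv]
    exact div_le_one_of_le₀ (rpow_le_rpow hx₀.le hx_le hα) (rpow_nonneg (hx₀.le.trans hx_le) _)
  have h₂ : (1 - x) ^ (1 - (d : ℝ)) ≤ 2 ^ ((d : ℝ) - 1) := by
    rw [show 1 - (d : ℝ) = -((d : ℝ) - 1) by ring, rpow_neg (by linarith), ← inv_rpow (by linarith)]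
    refine rpow_le_rpow (inv_nonneg.2 (by linarith)) ?_ (by simpa using hd)
    rw [inv_le_comm₀ (by linarith) two_pos]; linarith
  rw [qkerIntegrand, ← mul_assoc]
  exact (mul_le_of_le_one_left (rpow_nonneg (by linarith) _) h₁).trans h₂

lemma tendsto_rpow_mul_qkerIntegrand_one_sub (hb : 0 < b) :
    Tendsto (fun x => x ^ α * qkerIntegrand d α b (1 - x)) (𝓝[>] 0) (𝓝 (b ^ α)) := by
  have hderiv : HasDerivAt (fun x : ℝ => 1 - (1 - x) ^ (1 / b)) (1 / b) 0 := by
    have := (((hasDerivAt_id (0 : ℝ)).const_sub 1).rpow_const (p := 1 / b)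
      (Or.inl (by norm_num))).const_sub 1
    simpa using this
  have hslope : Tendsto (fun x : ℝ => (1 - (1 - x) ^ (1 / b)) / x) (𝓝[>] 0) (𝓝 (1 / b)) := by
    have := (hasDerivAt_iff_tendsto_slope.1 hderiv).mono_left
      (nhdsWithin_mono 0 fun x (hx : 0 < x) => hx.ne')
    refine this.congr fun x => ?_
    simp [slope_def_field]
  have hpow : Tendsto (fun x : ℝ => (1 - x) ^ (1 - (d : ℝ))) (𝓝[>] 0) (𝓝 1) := by
    have : ContinuousAt (fun x : ℝ => (1 - x) ^ (1 - (d : ℝ))) 0 :=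
      (continuousAt_const.sub continuousAt_id).rpow_const (Or.inl (by norm_num))
    simpa using this.tendsto.mono_left nhdsWithin_le_nhds
  have hlim := (hslope.rpow_const (p := -α) (Or.inl (by positivity))).mul hpow
  rw [show (1 / b) ^ (-α) * 1 = b ^ α by
    rw [mul_one, one_div, inv_rpow hb.le, ← rpow_neg hb.le, neg_neg]] at hlim
  refine hlim.congr' ?_
  filter_upwards [Ioo_mem_nhdsGT one_pos] with x hx
  have hφ : 0 ≤ 1 - (1 - x) ^ (1 / b) :=
    sub_nonneg.2 (rpow_le_one (by linarith [hx.2]) (by linarith [hx.1]) (by positivity))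
  rw [qkerIntegrand, div_rpow hφ hx.1.le, rpow_neg hx.1.le, div_inv_eq_mul]
  ring

lemma rpow_mul_Qker_one_sub_eq {s : ℝ} (hs : 0 < s) :
    s ^ (α - 1) * Qker d α b (1 - s) =
      1 / Gamma (1 - α) *
        ∫ u in Ioo 0 1, u ^ (-α) * ((s * u) ^ α * qkerIntegrand d α b (1 - s * u)) := by
  rw [Qker_eq, setIntegral_Ioo_one_sub hs.le, mul_left_comm, ← mul_assoc (s ^ (α - 1)),
    ← rpow_add_one hs.ne', sub_add_cancel, ← integral_const_mul]
  congr 1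
  refine setIntegral_congr_fun measurableSet_Ioo fun u hu => ?_
  rw [mul_rpow hs.le hu.1.le, rpow_neg hu.1.le]
  field_simp [(rpow_pos_of_pos hu.1 α).ne']

lemma norm_rpow_mul_Qker_one_sub_le (hd : 1 ≤ d) (hα : α ∈ Ioo 0 1) (hb₀ : 0 < b) (hb₁ : b ≤ 1)
    {s : ℝ} (hs : s ∈ Ioc 0 (1 / 2)) :
    ‖s ^ (α - 1) * Qker d α b (1 - s)‖ ≤ 2 ^ ((d : ℝ) - 1) / Gamma (2 - α) := by
  have hα₁ : 0 < 1 - α := by linarith [hα.2]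
  have hsu : ∀ u ∈ Ioo (0:ℝ) 1, 0 < s * u ∧ s * u ≤ 1 / 2 := fun u hu =>
    ⟨mul_pos hs.1 hu.1, by nlinarith [hs.1, hs.2, hu.2]⟩
  have h_mem : ∀ u ∈ Ioo (0:ℝ) 1,
      (s * u) ^ α * qkerIntegrand d α b (1 - s * u) ∈ Icc 0 (2 ^ ((d : ℝ) - 1)) := fun u hu =>
    rpow_mul_qkerIntegrand_one_sub_mem_Icc hd hα.1.le hb₀ hb₁ (hsu u hu).1 (hsu u hu).2
  have h_nonneg : ∀ u ∈ Ioo (0:ℝ) 1,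
      0 ≤ u ^ (-α) * ((s * u) ^ α * qkerIntegrand d α b (1 - s * u)) := fun u hu =>
    mul_nonneg (rpow_nonneg hu.1.le _) (h_mem u hu).1
  have h_le : ∫ u in Ioo 0 1, u ^ (-α) * ((s * u) ^ α * qkerIntegrand d α b (1 - s * u))
      ≤ ∫ u in Ioo 0 1, u ^ (-α) * 2 ^ ((d : ℝ) - 1) := by
    refine integral_mono_of_nonneg (ae_restrict_of_forall_mem measurableSet_Ioo h_nonneg)
      (((intervalIntegral.integrableOn_Ioo_rpow_iff one_pos).2 (by linarith)).mul_const _)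
      (ae_restrict_of_forall_mem measurableSet_Ioo fun u hu => ?_)
    exact mul_le_mul_of_nonneg_left (h_mem u hu).2 (rpow_nonneg hu.1.le _)
  rw [integral_mul_const, setIntegral_Ioo_zero_one_rpow (by linarith), neg_add_eq_sub] at h_le
  rw [rpow_mul_Qker_one_sub_eq hs.1, norm_of_nonneg (mul_nonneg (by positivity)
    (setIntegral_nonneg measurableSet_Ioo h_nonneg)),
    show 2 - α = (1 - α) + 1 by ring, Gamma_add_one hα₁.ne']
  refine (mul_le_mul_of_nonneg_left h_le (by positivity)).trans_eq ?_
  field_simp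

lemma tendsto_rpow_mul_Qker_one_sub (hd : 1 ≤ d) (hα : α ∈ Ioo 0 1) (hb₀ : 0 < b) (hb₁ : b ≤ 1) :
    Tendsto (fun s => s ^ (α - 1) * Qker d α b (1 - s)) (𝓝[>] 0)
      (𝓝 (b ^ α / Gamma (2 - α))) := by
  have hα₁ : 0 < 1 - α := by linarith [hα.2]
  have hw : Integrable (fun u : ℝ => u ^ (-α)) (volume.restrict (Ioo 0 1)) :=
    (intervalIntegral.integrableOn_Ioo_rpow_iff one_pos).2 (by linarith)
  have h_meas : ∀ s : ℝ, Measurable fun u : ℝ => (s * u) ^ α * qkerIntegrand d α b (1 - s * u) :=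
    fun s => (by fun_prop : Measurable fun u : ℝ => (s * u) ^ α).mul
      (measurable_qkerIntegrand.comp (by fun_prop))
  have h_bound : ∀ᶠ s in 𝓝[>] (0:ℝ), ∀ᵐ u ∂(volume.restrict (Ioo 0 1)),
      ‖(s * u) ^ α * qkerIntegrand d α b (1 - s * u)‖ ≤ 2 ^ ((d : ℝ) - 1) := by
    filter_upwards [Ioo_mem_nhdsGT (show (0:ℝ) < 1 / 2 by norm_num)] with s hs
    filter_upwards [ae_restrict_mem measurableSet_Ioo] with u hu
    have h_mem := rpow_mul_qkerIntegrand_one_sub_mem_Icc (d := d) hd hα.1.le hb₀ hb₁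
      (mul_pos hs.1 hu.1) (by nlinarith [hs.1, hs.2, hu.2])
    rw [norm_of_nonneg h_mem.1]
    exact h_mem.2
  have h_lim : ∀ᵐ u ∂(volume.restrict (Ioo 0 1)), Tendsto
      (fun s : ℝ => (s * u) ^ α * qkerIntegrand d α b (1 - s * u)) (𝓝[>] 0) (𝓝 (b ^ α)) := by
    filter_upwards [ae_restrict_mem measurableSet_Ioo] with u hu
    refine (tendsto_rpow_mul_qkerIntegrand_one_sub hb₀).comp (tendsto_nhdsWithin_iff.2
      ⟨?_, eventually_nhdsWithin_of_forall fun s (hs : 0 < s) => mul_pos hs hu.1⟩)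
    simpa using ((continuous_mul_const u).tendsto 0).mono_left nhdsWithin_le_nhds
  have hlim := tendsto_integral_mul_of_bounded hw
    (Eventually.of_forall fun s => (h_meas s).aestronglyMeasurable) h_bound h_lim
  rw [setIntegral_Ioo_zero_one_rpow (by linarith)] at hlim
  have hval : 1 / Gamma (1 - α) * (b ^ α * (1 / (-α + 1))) = b ^ α / Gamma (2 - α) := by
    rw [show 2 - α = (1 - α) + 1 by ring, Gamma_add_one hα₁.ne', neg_add_eq_sub]
    field_simp
  rw [← hval]
  refine (hlim.const_mul _).congr' ?_
  filter_upwards [self_mem_nhdsWithin] with s hs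
  exact (rpow_mul_Qker_one_sub_eq hs).symm

end kernel

section rescaling

variable {α γ : ℝ}

lemma rpow_mul_free_boundary_integrand_eq (Q : ℝ → ℝ) {ε t : ℝ} (hε : ε ∈ Ioo 0 1)
    (ht : t ∈ Ioo 0 1) :
    ε ^ (-(γ + 2 - α)) * (ε * ((1 - ε * t) * Q ((1 - ε) / (1 - ε * t)) * (1 - (1 - ε * t)) ^ γ)) =
      t ^ γ * (1 - t) ^ (1 - α) * ((1 - ε * t) ^ α *
        ((ε * (1 - t) / (1 - ε * t)) ^ (α - 1) * Q (1 - ε * (1 - t) / (1 - ε * t)))) := by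
  have hρ : 0 < 1 - ε * t := by nlinarith [hε.2, ht.1, ht.2]
  have ht' : 0 < 1 - t := by linarith [ht.2]
  rw [show (1 - ε) / (1 - ε * t) = 1 - ε * (1 - t) / (1 - ε * t) by field_simp; ring,
    show 1 - (1 - ε * t) = ε * t by ring, mul_rpow hε.1.le ht.1.le,
    div_rpow (mul_pos hε.1 ht').le hρ.le, mul_rpow hε.1.le ht'.le,
    show -(γ + 2 - α) = (α - 1) - γ - 1 by ring, rpow_sub hε.1, rpow_sub hε.1, rpow_one,
    rpow_sub_one hε.1.ne', rpow_sub_one ht'.ne', rpow_sub_one hρ.ne', rpow_sub ht', rpow_one]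
  generalize Q _ = q
  field_simp [(rpow_pos_of_pos hε.1 γ).ne']

lemma rpow_mul_free_boundary_integral_eq (Q : ℝ → ℝ) {z : ℝ} (hz : z ∈ Ioo 0 1) :
    (1 - z) ^ (-(γ + 2 - α)) * ∫ ρ in Ioo z 1, ρ * Q (z / ρ) * (1 - ρ) ^ γ =
      ∫ t in Ioo 0 1, t ^ γ * (1 - t) ^ (1 - α) * ((1 - (1 - z) * t) ^ α *
        (((1 - z) * (1 - t) / (1 - (1 - z) * t)) ^ (α - 1) *
          Q (1 - (1 - z) * (1 - t) / (1 - (1 - z) * t)))) := by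
  obtain ⟨ε, hε, rfl⟩ : ∃ ε ∈ Ioo (0:ℝ) 1, z = 1 - ε :=
    ⟨1 - z, ⟨by linarith [hz.2], by linarith [hz.1]⟩, (sub_sub_cancel 1 z).symm⟩
  rw [sub_sub_cancel, setIntegral_Ioo_one_sub hε.1.le, ← integral_const_mul,
    ← integral_const_mul]
  exact setIntegral_congr_fun measurableSet_Ioo fun t ht =>
    rpow_mul_free_boundary_integrand_eq Q hε ht

lemma tendsto_free_boundary_integral {R w : ℝ → ℝ} {L C : ℝ} (hα : 0 ≤ α)
    (hw : IntegrableOn w (Ioo 0 1)) (hR : Measurable R) (hR_lim : Tendsto R (𝓝[>] 0) (𝓝 L))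
    (hR_bound : ∀ s ∈ Ioc 0 (1 / 2), ‖R s‖ ≤ C) :
    Tendsto (fun z => ∫ t in Ioo 0 1, w t *
        ((1 - (1 - z) * t) ^ α * R ((1 - z) * (1 - t) / (1 - (1 - z) * t))))
      (𝓝[<] 1) (𝓝 (L * ∫ t in Ioo 0 1, w t)) := by
  refine tendsto_integral_mul_of_bounded (C := C) hw
    (Eventually.of_forall fun z => Measurable.aestronglyMeasurable (by fun_prop)) ?_ ?_
  · filter_upwards [Ioo_mem_nhdsLT (show (1 / 2 : ℝ) < 1 by norm_num)] with z hz
    filter_upwards [ae_restrict_mem measurableSet_Ioo] with t ht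
    have hρ₀ : 0 < 1 - (1 - z) * t := by nlinarith [hz.1, ht.1, ht.2]
    have hρ₁ : 1 - (1 - z) * t ≤ 1 := by nlinarith [hz.2, ht.1]
    have hs₀ : 0 < (1 - z) * (1 - t) / (1 - (1 - z) * t) :=
      div_pos (mul_pos (by linarith [hz.2]) (by linarith [ht.2])) hρ₀
    have hs : (1 - z) * (1 - t) / (1 - (1 - z) * t) ≤ 1 / 2 := by
      rw [div_le_iff₀ hρ₀]; nlinarith [hz.1, hz.2, ht.1, ht.2]
    rw [norm_mul, norm_of_nonneg (rpow_nonneg hρ₀.le _)]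
    exact (mul_le_of_le_one_left (norm_nonneg _) (rpow_le_one hρ₀.le hρ₁ hα)).trans
      (hR_bound _ ⟨hs₀, hs⟩)
  · filter_upwards [ae_restrict_mem measurableSet_Ioo] with t ht
    have hρ : Tendsto (fun z : ℝ => 1 - (1 - z) * t) (𝓝[<] 1) (𝓝 1) := by
      have : Continuous fun z : ℝ => 1 - (1 - z) * t := by fun_prop
      simpa using (this.tendsto 1).mono_left nhdsWithin_le_nhds
    have hs : Tendsto (fun z : ℝ => (1 - z) * (1 - t) / (1 - (1 - z) * t)) (𝓝[<] 1) (𝓝[>] 0) := by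
      refine tendsto_nhdsWithin_iff.2 ⟨?_, ?_⟩
      · have : Tendsto (fun z : ℝ => (1 - z) * (1 - t)) (𝓝[<] 1) (𝓝 0) := by
          have : Continuous fun z : ℝ => (1 - z) * (1 - t) := by fun_prop
          simpa using (this.tendsto 1).mono_left nhdsWithin_le_nhds
        have hdiv := this.div hρ one_ne_zero
        rwa [zero_div] at hdiv
      · filter_upwards [Ioo_mem_nhdsLT zero_lt_one] with z hz
        have hρ₀ : 0 < 1 - (1 - z) * t := by nlinarith [hz.1, ht.1, ht.2]
        exact div_pos (mul_pos (sub_pos.2 hz.2) (sub_pos.2 ht.2)) hρ₀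
    simpa using (hρ.rpow_const (Or.inl one_ne_zero)).mul (hR_lim.comp hs)

end rescaling

/-- sharp constant at the free boundary in the slow-diffusion range `m > 1`:
with `γ = (2-α)/(m-1)`,
`(1-z)^{-γm}·∫_z^1 ρ·Q(z/ρ)·(1-ρ)^γ dρ → b^α·Γ(1+γ)/Γ(3-α+γ)` as `z → 1⁻`. -/
theorem sharp_constant_free_boundary (d : ℕ) (hd : 1 ≤ d) (α m b : ℝ)
    (hα : α ∈ Set.Ioo (0:ℝ) 1)
    (hm : 1 < m)
    (hb : b = α / (2 + (d:ℝ) * (m - 1)))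
    (γ : ℝ) (hγ : γ = (2 - α) / (m - 1)) :
    Filter.Tendsto
      (fun z : ℝ =>
        (1 - z) ^ (-(γ * m)) * ∫ ρ in Set.Ioo z 1, ρ * Qker d α b (z / ρ) * (1 - ρ) ^ γ)
      (nhdsWithin 1 (Set.Ioo 0 1))
      (nhds (b ^ α * Real.Gamma (1 + γ) / Real.Gamma (3 - α + γ))) := by
  have hm₁ : 0 < m - 1 := sub_pos.2 hm
  have hb₀ : 0 < b := hb ▸ div_pos hα.1 (by positivity)
  have hb₁ : b ≤ 1 := by
    rw [hb, div_le_one (by positivity)]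
    nlinarith [hα.2, mul_nonneg (Nat.cast_nonneg d : (0:ℝ) ≤ d) hm₁.le]
  have hγ₀ : 0 < γ := hγ ▸ div_pos (by linarith [hα.2]) hm₁
  have hγm : γ * m = γ + 2 - α := by
    rw [hγ]; field_simp; ring
  have hw : IntegrableOn (fun t : ℝ => t ^ γ * (1 - t) ^ (1 - α)) (Ioo 0 1) :=
    (((continuous_rpow_const hγ₀.le).mul ((continuous_rpow_const (by linarith [hα.2])).comp
      (continuous_const.sub continuous_id))).integrableOn_Icc).mono_set Ioo_subset_Icc_self
  have hlim := tendsto_free_boundary_integral hα.1.le hw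
    ((measurable_id.pow_const _).mul (measurable_Qker.comp (measurable_const.sub measurable_id)))
    (tendsto_rpow_mul_Qker_one_sub hd hα hb₀ hb₁)
    (fun s hs => norm_rpow_mul_Qker_one_sub_le hd hα hb₀ hb₁ hs)
  have hbeta := setIntegral_Ioo_rpow_mul_one_sub_rpow (p := γ + 1) (q := 2 - α)
    (by linarith) (by linarith [hα.2])
  rw [add_sub_cancel_right, show 2 - α - 1 = 1 - α by ring] at hbeta
  rw [hbeta, add_comm γ 1, show 1 + γ + (2 - α) = 3 - α + γ by ring,
    div_mul_div_comm, mul_comm (Gamma (2 - α)), ← mul_assoc,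
    mul_div_mul_right _ _ (Gamma_pos_of_pos (by linarith [hα.2])).ne'] at hlim
  refine (hlim.mono_left (nhdsWithin_mono 1 Ioo_subset_Iio_self)).congr' ?_
  filter_upwards [self_mem_nhdsWithin] with z hz
  rw [hγm]
  exact (rpow_mul_free_boundary_integral_eq _ hz).symm
end
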